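/- arXiv:1107.2714 — 5 statements merged into one kernel-verified Lean document; each statement's English description precedes it below -/
import Mathlib

section
/- If X is a random variable with E X = 0 and l(x) = E[|X|^2 1_{|X| ≤ x}] is slowly varying as x → ∞ with E|X|^2 = ∞, then E[|X| 1_{|X| ≥ x}] = o(l(x)/x) as x → ∞. -/
/-!
Write `T z = E[|X|; |X| > z]` and `l` for the truncated second moment. On `z < |X| ≤ 2z` one
has `|X| ≤ |X|² / z`, so `T z ≤ (l (2z) - l z) / z + T (2z)`. Slow variation gives
`l (2z) ≤ (1 + ε) l z` for large `z`, hence the drops of `T` along `y, 2y, 4y, …` are bounded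
by `ε (l y / y) ((1 + ε) / 2)^k`; summing the geometric series and using `T (2^n y) → 0`
yields `T y ≤ 2ε / (1 - ε) · l y / y`.
-/

open MeasureTheory ProbabilityTheory Filter Asymptotics Set Topology

noncomputable def truncatedSecondMoment (ν : Measure ℝ) (x : ℝ) : ℝ :=
  ∫ t in {t | |t| ≤ x}, |t| ^ 2 ∂ν

noncomputable def tailFirstMoment (ν : Measure ℝ) (x : ℝ) : ℝ :=
  ∫ t in {t | x < |t|}, |t| ∂ν

section Doubling

variable {T L : ℝ → ℝ}

lemma le_pow_mul_of_le_mul_two_mul {a x₀ y : ℝ} (ha : 0 ≤ a)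
    (hL : ∀ z ≥ x₀, L (2 * z) ≤ a * L z) (hy0 : 0 ≤ y) (hy : x₀ ≤ y) (n : ℕ) :
    L (2 ^ n * y) ≤ a ^ n * L y := by
  induction n with
  | zero => simp
  | succ n ih =>
    have hn : x₀ ≤ 2 ^ n * y := hy.trans (le_mul_of_one_le_left hy0 (one_le_pow₀ one_le_two))
    calc L (2 ^ (n + 1) * y) = L (2 * (2 ^ n * y)) := by ring_nf
      _ ≤ a * L (2 ^ n * y) := hL _ hn
      _ ≤ a * (a ^ n * L y) := by gcongr
      _ = a ^ (n + 1) * L y := by ring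

lemma le_mul_div_of_dyadic_step {x₀ ε y : ℝ} (hε : 0 ≤ ε) (hε1 : ε < 1)
    (hstep : ∀ z > 0, T z ≤ (L (2 * z) - L z) / z + T (2 * z))
    (hL : ∀ z ≥ x₀, L (2 * z) ≤ (1 + ε) * L z) (hT : Tendsto T atTop (𝓝 0))
    (hy0 : 0 < y) (hy : x₀ ≤ y) (hLy : 0 ≤ L y) :
    T y ≤ 2 * ε / (1 - ε) * (L y / y) := by
  set r := (1 + ε) / 2 with hr
  have hdrop (k : ℕ) : T (2 ^ k * y) - T (2 ^ (k + 1) * y) ≤ ε * (L y / y) * r ^ k := by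
    have hk : 0 < 2 ^ k * y := by positivity
    have hxk : x₀ ≤ 2 ^ k * y :=
      hy.trans (le_mul_of_one_le_left hy0.le (one_le_pow₀ one_le_two))
    calc T (2 ^ k * y) - T (2 ^ (k + 1) * y)
        ≤ (L (2 * (2 ^ k * y)) - L (2 ^ k * y)) / (2 ^ k * y) := by
          have := hstep _ hk
          rw [pow_succ', mul_assoc]
          linarith
      _ ≤ ε * L (2 ^ k * y) / (2 ^ k * y) := by gcongr; linarith [hL _ hxk]
      _ ≤ ε * ((1 + ε) ^ k * L y) / (2 ^ k * y) := by
          gcongr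
          exact le_pow_mul_of_le_mul_two_mul (by linarith) hL hy0.le hy k
      _ = ε * (L y / y) * r ^ k := by
          simp only [r, div_pow]
          field_simp
  have hpartial (n : ℕ) : T y - T (2 ^ n * y) ≤ 2 * ε / (1 - ε) * (L y / y) := by
    have hgeom : ∑ k ∈ Finset.range n, r ^ k ≤ 1 / (1 - r) := by
      have h := geom_sum_Ico_le_of_lt_one (m := 0) (n := n) (by positivity) (by linarith : r < 1)
      rwa [← Finset.range_eq_Ico, pow_zero] at h
    calc T y - T (2 ^ n * y) = ∑ k ∈ Finset.range n, (T (2 ^ k * y) - T (2 ^ (k + 1) * y)) := by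
          simpa using (Finset.sum_range_sub' (fun k => T (2 ^ k * y)) n).symm
      _ ≤ ∑ k ∈ Finset.range n, ε * (L y / y) * r ^ k := Finset.sum_le_sum fun k _ => hdrop k
      _ = ε * (L y / y) * ∑ k ∈ Finset.range n, r ^ k := (Finset.mul_sum ..).symm
      _ ≤ ε * (L y / y) * (1 / (1 - r)) := by gcongr
      _ = 2 * ε / (1 - ε) * (L y / y) := by
          simp only [r]
          field_simp
          ring
  have hlim : Tendsto (fun n : ℕ => T y - T (2 ^ n * y)) atTop (𝓝 (T y)) := by
    simpa using tendsto_const_nhds.sub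
      (hT.comp ((tendsto_pow_atTop_atTop_of_one_lt one_lt_two).atTop_mul_const hy0))
  exact le_of_tendsto' hlim hpartial

theorem isLittleO_of_dyadic_step (hT0 : ∀ z, 0 ≤ T z) (hL0 : ∀ z, 0 ≤ L z)
    (hslow : Tendsto (fun x => L (2 * x) / L x) atTop (𝓝 1))
    (hstep : ∀ z > 0, T z ≤ (L (2 * z) - L z) / z + T (2 * z))
    (hT : Tendsto T atTop (𝓝 0)) : T =o[atTop] fun x => L x / x := by
  refine isLittleO_iff.2 fun c hc => ?_
  set ε := c / (c + 2)
  have hε : 0 < ε := by positivity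
  have hε1 : ε < 1 := (div_lt_one (by positivity)).2 (by linarith)
  have hεc : 2 * ε / (1 - ε) = c := by
    simp only [ε]
    field_simp
    ring
  have hdoubling : ∀ᶠ z in atTop, L (2 * z) ≤ (1 + ε) * L z := by
    filter_upwards [hslow.eventually (lt_mem_nhds one_pos),
      hslow.eventually (gt_mem_nhds (lt_add_of_pos_right 1 hε))] with z hpos hlt
    -- a vanishing denominator would make the ratio `0`
    have hLz : 0 < L z := (hL0 z).lt_of_ne' fun h => by simp [h] at hpos
    exact ((div_lt_iff₀ hLz).1 hlt).le
  obtain ⟨x₀, hx₀⟩ := eventually_atTop.1 hdoubling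
  filter_upwards [eventually_ge_atTop x₀, eventually_gt_atTop 0] with y hy hy0
  rw [Real.norm_of_nonneg (hT0 y), Real.norm_of_nonneg (div_nonneg (hL0 y) hy0.le), ← hεc]
  exact le_mul_div_of_dyadic_step hε.le hε1 hstep hx₀ hT hy0 hy (hL0 y)

end Doubling

section Moments

variable (ν : Measure ℝ)

lemma integrableOn_abs_le [IsFiniteMeasureOnCompacts ν] {f : ℝ → ℝ} (hf : Continuous f)
    (x : ℝ) : IntegrableOn f {t | |t| ≤ x} ν := by
  rw [show {t : ℝ | |t| ≤ x} = Icc (-x) x from Set.ext fun _ => abs_le (b := x)]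
  exact hf.integrableOn_Icc

lemma truncatedSecondMoment_nonneg (x : ℝ) : 0 ≤ truncatedSecondMoment ν x :=
  integral_nonneg fun _ => by positivity

lemma truncatedSecondMoment_mono [IsFiniteMeasureOnCompacts ν] :
    Monotone (truncatedSecondMoment ν) := fun a b hab =>
  setIntegral_mono_set (integrableOn_abs_le ν (by fun_prop) b)
    (ae_of_all _ fun _ => by positivity)
    (LE.le.eventuallyLE fun _ (ht : _ ≤ a) => ht.trans hab)

lemma tailFirstMoment_nonneg (x : ℝ) : 0 ≤ tailFirstMoment ν x :=
  integral_nonneg fun _ => abs_nonneg _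

lemma tailFirstMoment_le_sub_div_add [IsFiniteMeasureOnCompacts ν]
    (hν : Integrable (fun t : ℝ => |t|) ν) {z : ℝ} (hz : 0 < z) :
    tailFirstMoment ν z ≤ (truncatedSecondMoment ν (2 * z) - truncatedSecondMoment ν z) / z
      + tailFirstMoment ν (2 * z) := by
  set A := {t : ℝ | |t| ≤ 2 * z} \ {t | |t| ≤ z}
  have hAm : MeasurableSet A :=
    (measurableSet_le (by fun_prop) measurable_const).diff
      (measurableSet_le (by fun_prop) measurable_const)
  have hsplit : {t : ℝ | z < |t|} = A ∪ {t | 2 * z < |t|} := by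
    ext t
    simp only [A, mem_union, Set.mem_sdiff, mem_ofPred_eq, not_le]
    constructor
    · intro h
      exact (le_or_gt |t| (2 * z)).imp (fun h' => ⟨h', h⟩) id
    · rintro (⟨-, h⟩ | h) <;> linarith
  have hdisj : Disjoint A {t | 2 * z < |t|} :=
    disjoint_left.2 fun t ht (ht' : 2 * z < |t|) => absurd ht.1 (not_le.2 ht')
  have hA :
      ∫ t in A, |t| ^ 2 ∂ν = truncatedSecondMoment ν (2 * z) - truncatedSecondMoment ν z :=
    setIntegral_sdiff (measurableSet_le (by fun_prop) measurable_const)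
      (integrableOn_abs_le ν (by fun_prop) _)
      fun t (ht : |t| ≤ z) => show |t| ≤ 2 * z by linarith
  have hmid : ∫ t in A, |t| ∂ν ≤ ∫ t in A, |t| ^ 2 / z ∂ν := by
    refine setIntegral_mono_on hν.integrableOn
      (((integrableOn_abs_le ν (by fun_prop) _).mono_set sdiff_subset).div_const z) hAm ?_
    rintro t ⟨-, ht⟩
    rw [le_div_iff₀ hz, sq]
    exact mul_le_mul_of_nonneg_left (not_le.1 ht).le (abs_nonneg t)
  rw [tailFirstMoment, hsplit, setIntegral_union hdisj
    (measurableSet_lt measurable_const (by fun_prop)) hν.integrableOn hν.integrableOn,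
    ← hA, ← integral_div]
  exact add_le_add hmid le_rfl

lemma tendsto_tailFirstMoment_atTop (hν : Integrable (fun t : ℝ => |t|) ν) :
    Tendsto (tailFirstMoment ν) atTop (𝓝 0) := by
  have h := tendsto_setIntegral_of_antitone (μ := ν) (f := fun t : ℝ => |t|)
    (s := fun x : ℝ => {t : ℝ | x < |t|})
    (fun _ => measurableSet_lt measurable_const (by fun_prop))
    (fun _ _ hab _ (ht : _ < _) => hab.trans_lt ht) ⟨0, hν.integrableOn⟩
  have hempty : (⋂ x : ℝ, {t : ℝ | x < |t|}) = ∅ :=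
    eq_empty_of_forall_notMem fun t ht => lt_irrefl |t| (mem_iInter.1 ht |t|)
  rw [hempty, Measure.restrict_empty, integral_zero_measure] at h
  exact h

lemma setIntegral_abs_ge_eq_zero_of_not_integrable [IsFiniteMeasureOnCompacts ν]
    (hν : ¬ Integrable (fun t : ℝ => |t|) ν) (x : ℝ) :
    ∫ t in {t | x ≤ |t|}, |t| ∂ν = 0 := by
  refine integral_undef fun h => hν ?_
  have hcover : {t : ℝ | x ≤ |t|} ∪ {t | |t| ≤ x} = univ :=
    eq_univ_of_forall fun t => le_total x |t|
  rw [← integrableOn_univ, ← hcover]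
  exact IntegrableOn.union h (integrableOn_abs_le ν continuous_abs x)

theorem isLittleO_setIntegral_abs_ge [IsFiniteMeasureOnCompacts ν]
    (hslow : Tendsto (fun x => truncatedSecondMoment ν (2 * x) / truncatedSecondMoment ν x)
      atTop (𝓝 1)) :
    (fun x => ∫ t in {t | x ≤ |t|}, |t| ∂ν) =o[atTop]
      fun x => truncatedSecondMoment ν x / x := by
  by_cases hν : Integrable (fun t : ℝ => |t|) ν
  swap
  · simp only [setIntegral_abs_ge_eq_zero_of_not_integrable ν hν]
    exact isLittleO_zero _ _
  have htail : tailFirstMoment ν =o[atTop] fun x => truncatedSecondMoment ν x / x :=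
    isLittleO_of_dyadic_step (tailFirstMoment_nonneg ν) (truncatedSecondMoment_nonneg ν) hslow
      (fun z hz => tailFirstMoment_le_sub_div_add ν hν hz) (tendsto_tailFirstMoment_atTop ν hν)
  have hhalf : Tendsto (fun x : ℝ => x / 2) atTop atTop := tendsto_id.atTop_div_const two_pos
  refine ((IsBigO.of_bound' ?_).trans_isLittleO (htail.comp_tendsto hhalf)).trans_isBigO
    (IsBigO.of_bound 2 ?_)
  · filter_upwards [eventually_gt_atTop 0] with x hx
    rw [Function.comp_apply, Real.norm_of_nonneg (integral_nonneg fun _ => abs_nonneg _),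
      Real.norm_of_nonneg (tailFirstMoment_nonneg ν _)]
    exact setIntegral_mono_set hν.integrableOn (ae_of_all _ fun _ => abs_nonneg _)
      (LE.le.eventuallyLE fun t (ht : x ≤ |t|) => show x / 2 < |t| by linarith)
  · filter_upwards [eventually_gt_atTop 0] with x hx
    have hmono := truncatedSecondMoment_mono ν (by linarith : x / 2 ≤ x)
    rw [Function.comp_apply, Real.norm_of_nonneg (div_nonneg (truncatedSecondMoment_nonneg ν _)
      (by positivity)), Real.norm_of_nonneg (div_nonneg (truncatedSecondMoment_nonneg ν x) hx.le)]
    calc truncatedSecondMoment ν (x / 2) / (x / 2)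
        = 2 * (truncatedSecondMoment ν (x / 2) / x) := by ring
      _ ≤ 2 * (truncatedSecondMoment ν x / x) := by gcongr

end Moments

theorem truncated_first_moment_littleO_of_slowly_varying_general
    {Ω : Type*} [MeasureSpace Ω] [IsProbabilityMeasure (ℙ : Measure Ω)]
    (X : Ω → ℝ) (hX : AEMeasurable X ℙ)
    (l : ℝ → ℝ)
    (hl : ∀ x : ℝ, l x = ∫ ω in {ω | |X ω| ≤ x}, |X ω| ^ 2 ∂ℙ)
    (hslow : ∀ c : ℝ, 0 < c → Tendsto (fun x => l (c * x) / l x) atTop (nhds 1)) :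
    (fun x : ℝ => ∫ ω in {ω | x ≤ |X ω|}, |X ω| ∂ℙ) =o[atTop] (fun x => l x / x) := by
  have hsecond (x : ℝ) : l x = truncatedSecondMoment (Measure.map X ℙ) x :=
    (hl x).trans (setIntegral_map (s := {t | |t| ≤ x})
      (measurableSet_le (by fun_prop) measurable_const)
      (by fun_prop : Continuous fun t : ℝ => |t| ^ 2).aestronglyMeasurable hX).symm
  have hfirst (x : ℝ) : ∫ ω in {ω | x ≤ |X ω|}, |X ω| ∂ℙ
      = ∫ t in {t | x ≤ |t|}, |t| ∂(Measure.map X ℙ) :=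
    (setIntegral_map (s := {t | x ≤ |t|}) (measurableSet_le measurable_const (by fun_prop))
      continuous_abs.aestronglyMeasurable hX).symm
  obtain rfl : l = truncatedSecondMoment (Measure.map X ℙ) := funext hsecond
  simpa only [hfirst] using isLittleO_setIntegral_abs_ge (Measure.map X ℙ) (hslow 2 two_pos)

/-- If `X` is a random variable with `E X = 0` and
`l x = E[|X|² 1_{|X| ≤ x}]` is slowly varying as `x → ∞` with `E|X|² = ∞`, then
`E[|X| 1_{|X| ≥ x}] = o(l(x)/x)` as `x → ∞`. -/
theorem truncated_first_moment_littleO_of_slowly_varying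
    {Ω : Type*} [MeasureSpace Ω] [IsProbabilityMeasure (ℙ : Measure Ω)]
    (X : Ω → ℝ) (hX : AEMeasurable X ℙ)
    (hmean : ∫ ω, X ω ∂ℙ = 0)
    (l : ℝ → ℝ)
    (hl : ∀ x : ℝ, l x = ∫ ω in {ω | |X ω| ≤ x}, |X ω| ^ 2 ∂ℙ)
    (hslow : ∀ c : ℝ, 0 < c → Tendsto (fun x => l (c * x) / l x) atTop (nhds 1))
    (hinf : ¬ Integrable (fun ω => |X ω| ^ 2) ℙ) :
    (fun x : ℝ => ∫ ω in {ω | x ≤ |X ω|}, |X ω| ∂ℙ) =o[atTop] (fun x => l x / x) :=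
  truncated_first_moment_littleO_of_slowly_varying_general X hX l hl hslow
end

section
/- Let K : ℝ → ℝ be a nonnegative kernel with ∫ K = 1, let μ be a probability measure on ℝ, h > 0, and z ∈ ℂ with Im z > 0. Then the Stieltjes transform of the smoothed measure satisfies: ∫∫ (λ + y h − z)^{-1} K(y) dy dμ(λ) differs from ∫ (λ − z)^{-1} dμ(λ) by at most 2ε/Im z + h y_0/(Im z)^2, where y_0 is chosen so that ∫_{|y| > y_0} K(y) dy ≤ ε. -/
/-!
For real `x` the resolvent `(x - z)⁻¹` is bounded by `1 / Im z` and `1 / (Im z)²`-Lipschitz in `x`.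
Subtracting `(l - z)⁻¹ = ∫ K(y) (l - z)⁻¹ dy` turns the inner difference into a `K`-average of
`(l + y h - z)⁻¹ - (l - z)⁻¹`: on the tail `|y| > y₀` this is at most `2 / Im z` and carries `K`-mass
at most `ε`, on the core `|y| ≤ y₀` it is at most `h y₀ / (Im z)²`. The bound is uniform in `l`,
so it survives integration against the probability measure `μ`.
-/

open MeasureTheory Complex

section Resolvent

variable {z : ℂ}

lemma ofReal_sub_ne_zero_of_im_pos (hz : 0 < z.im) (x : ℝ) : (x : ℂ) - z ≠ 0 := by
  intro h
  have := congrArg Complex.im h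
  simp only [sub_im, ofReal_im, zero_sub, zero_im, neg_eq_zero] at this
  exact hz.ne' this

lemma continuous_inv_ofReal_sub (hz : 0 < z.im) : Continuous fun x : ℝ => ((x : ℂ) - z)⁻¹ :=
  (continuous_ofReal.sub continuous_const).inv₀ (ofReal_sub_ne_zero_of_im_pos hz)

lemma norm_inv_ofReal_sub_le (hz : 0 < z.im) (x : ℝ) : ‖((x : ℂ) - z)⁻¹‖ ≤ z.im⁻¹ := by
  rw [norm_inv]
  refine inv_anti₀ hz ?_
  calc z.im = |((x : ℂ) - z).im| := by simp [abs_of_pos hz]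
    _ ≤ ‖(x : ℂ) - z‖ := abs_im_le_norm _

lemma norm_inv_ofReal_sub_sub_inv_le (hz : 0 < z.im) (x x' : ℝ) :
    ‖((x : ℂ) - z)⁻¹ - ((x' : ℂ) - z)⁻¹‖ ≤ |x - x'| / z.im ^ 2 := by
  rw [inv_sub_inv' (ofReal_sub_ne_zero_of_im_pos hz x) (ofReal_sub_ne_zero_of_im_pos hz x'),
    norm_mul, norm_mul, sub_sub_sub_cancel_right, ← ofReal_sub, norm_real, Real.norm_eq_abs,
    abs_sub_comm, div_eq_mul_inv, pow_two, mul_inv]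
  have hx := norm_inv_ofReal_sub_le hz x
  have hx' := norm_inv_ofReal_sub_le hz x'
  calc ‖((x : ℂ) - z)⁻¹‖ * |x - x'| * ‖((x' : ℂ) - z)⁻¹‖
      ≤ z.im⁻¹ * |x - x'| * z.im⁻¹ := by gcongr
    _ = |x - x'| * (z.im⁻¹ * z.im⁻¹) := by ring

end Resolvent

section KernelAverage

variable {α E : Type*} [MeasurableSpace α] [NormedAddCommGroup E] [NormedSpace ℝ E]
  {ν : Measure α} {K : α → ℝ}

lemma integral_smul_sub_of_integral_eq_one [CompleteSpace E] {f : α → E} (c : E) (hKi : Integrable K ν)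
    (hK1 : ∫ x, K x ∂ν = 1) (hKf : Integrable (fun x => K x • f x) ν) :
    (∫ x, K x • f x ∂ν) - c = ∫ x, K x • (f x - c) ∂ν := by
  simp_rw [smul_sub]
  rw [integral_sub hKf (hKi.smul_const c), integral_smul_const, hK1, one_smul]

lemma norm_integral_smul_le_of_tail_le {f : α → E} {S : Set α} {ε M δ : ℝ}
    (hK : ∀ x, 0 ≤ K x) (hKi : Integrable K ν) (hK1 : ∫ x, K x ∂ν ≤ 1)
    (hS : MeasurableSet S) (htail : ∫ x in S, K x ∂ν ≤ ε)
    (hM : 0 ≤ M) (hfS : ∀ x ∈ S, ‖f x‖ ≤ M) (hδ : 0 ≤ δ) (hfSc : ∀ x ∉ S, ‖f x‖ ≤ δ) :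
    ‖∫ x, K x • f x ∂ν‖ ≤ ε * M + δ := by
  have hg : Integrable (fun x => M * S.indicator K x + δ * K x) ν :=
    ((hKi.indicator hS).const_mul M).add (hKi.const_mul δ)
  have hpointwise : ∀ x, ‖K x • f x‖ ≤ M * S.indicator K x + δ * K x := by
    intro x
    rw [norm_smul, Real.norm_of_nonneg (hK x)]
    by_cases hx : x ∈ S
    · rw [Set.indicator_of_mem hx]
      nlinarith [hfS x hx, hK x]
    · rw [Set.indicator_of_notMem hx]
      nlinarith [hfSc x hx, hK x]
  calc ‖∫ x, K x • f x ∂ν‖ ≤ ∫ x, M * S.indicator K x + δ * K x ∂ν :=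
        norm_integral_le_of_norm_le hg (.of_forall hpointwise)
    _ = M * ∫ x in S, K x ∂ν + δ * ∫ x, K x ∂ν := by
        rw [integral_add ((hKi.indicator hS).const_mul M) (hKi.const_mul δ), integral_const_mul,
          integral_const_mul, integral_indicator hS]
    _ ≤ M * ε + δ * 1 := by gcongr
    _ = ε * M + δ := by ring

end KernelAverage

section SmoothedResolvent

variable {K : ℝ → ℝ} {z : ℂ}

lemma integrable_integral_smul_inv_ofReal_add_mul_sub (hz : 0 < z.im) (hKi : Integrable K)
    (h : ℝ) (μ : Measure ℝ) [IsFiniteMeasure μ] :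
    Integrable (fun l : ℝ => ∫ y, K y • (((l + y * h : ℝ) : ℂ) - z)⁻¹) μ := by
  have hbound : ∀ l y : ℝ, ‖K y • (((l + y * h : ℝ) : ℂ) - z)⁻¹‖ ≤ ‖K y‖ * z.im⁻¹ := fun l y => by
    rw [norm_smul]
    gcongr
    exact norm_inv_ofReal_sub_le hz _
  have hcont : Continuous fun l : ℝ => ∫ y, K y • (((l + y * h : ℝ) : ℂ) - z)⁻¹ := by
    refine continuous_of_dominated (fun l => ?_) (fun l => .of_forall (hbound l))
      (hKi.norm.mul_const _) (.of_forall fun y => ?_)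
    · exact hKi.aestronglyMeasurable.smul ((continuous_inv_ofReal_sub hz).comp
        (continuous_const.add (continuous_id.mul continuous_const))).aestronglyMeasurable
    · exact (continuous_const : Continuous fun _ : ℝ => K y).smul ((continuous_inv_ofReal_sub hz).comp
        (continuous_id.add continuous_const))
  refine .of_bound hcont.aestronglyMeasurable ((∫ y, ‖K y‖) * z.im⁻¹) (.of_forall fun l => ?_)
  rw [← integral_mul_const]
  exact norm_integral_le_of_norm_le (hKi.norm.mul_const _) (.of_forall (hbound l))

lemma norm_integral_smul_inv_ofReal_add_mul_sub_sub_le (hz : 0 < z.im) (hK : ∀ y, 0 ≤ K y)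
    (hK1 : ∫ y, K y = 1) {h ε y₀ : ℝ} (hh : 0 ≤ h) (hy₀ : 0 ≤ y₀)
    (htail : ∫ y in {y : ℝ | y₀ < |y|}, K y ≤ ε) (l : ℝ) :
    ‖(∫ y, K y • (((l + y * h : ℝ) : ℂ) - z)⁻¹) - ((l : ℂ) - z)⁻¹‖
      ≤ 2 * ε / z.im + h * y₀ / z.im ^ 2 := by
  have hKi : Integrable K := integrable_of_integral_eq_one hK1
  have hKf : Integrable (fun y => K y • (((l + y * h : ℝ) : ℂ) - z)⁻¹) :=
    hKi.smul_bdd z.im⁻¹ ((continuous_inv_ofReal_sub hz).comp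
      (continuous_const.add (continuous_id.mul continuous_const))).aestronglyMeasurable
      (.of_forall fun y => norm_inv_ofReal_sub_le hz _)
  rw [integral_smul_sub_of_integral_eq_one _ hKi hK1 hKf]
  have htail_bound : ∀ y, ‖(((l + y * h : ℝ) : ℂ) - z)⁻¹ - ((l : ℂ) - z)⁻¹‖ ≤ 2 / z.im :=
    fun y => calc _ ≤ z.im⁻¹ + z.im⁻¹ :=
        (norm_sub_le _ _).trans (add_le_add (norm_inv_ofReal_sub_le hz _)
          (norm_inv_ofReal_sub_le hz _))
      _ = 2 / z.im := by ring
  have hcore_bound : ∀ y ∉ {y : ℝ | y₀ < |y|},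
      ‖(((l + y * h : ℝ) : ℂ) - z)⁻¹ - ((l : ℂ) - z)⁻¹‖ ≤ h * y₀ / z.im ^ 2 := fun y hy => by
    refine (norm_inv_ofReal_sub_sub_inv_le hz _ _).trans ?_
    rw [add_sub_cancel_left, abs_mul, abs_of_nonneg hh, mul_comm]
    gcongr
    exact not_lt.mp hy
  calc _ ≤ ε * (2 / z.im) + h * y₀ / z.im ^ 2 :=
        norm_integral_smul_le_of_tail_le hK hKi hK1.le
          (measurableSet_lt measurable_const continuous_abs.measurable) htail (by positivity)
          (fun y _ => htail_bound y) (by positivity) hcore_bound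
    _ = 2 * ε / z.im + h * y₀ / z.im ^ 2 := by ring

end SmoothedResolvent

theorem smoothed_stieltjes_close_general
    (K : ℝ → ℝ) (hKnonneg : ∀ x, 0 ≤ K x)
    (hKint : ∫ x, K x = 1)
    (μ : Measure ℝ) [IsProbabilityMeasure μ]
    (h : ℝ) (hh : 0 < h) (z : ℂ) (hz : 0 < z.im)
    (ε y₀ : ℝ) (hy₀ : 0 < y₀)
    (htail : ∫ y in {y : ℝ | y₀ < |y|}, K y ≤ ε) :
    ‖(∫ l : ℝ, (∫ y : ℝ, (K y : ℂ) * ((l : ℂ) + y * h - z)⁻¹) ∂μ)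
        - ∫ l : ℝ, ((l : ℂ) - z)⁻¹ ∂μ‖
      ≤ 2 * ε / z.im + h * y₀ / z.im ^ 2 := by
  have hsmul : ∀ l y : ℝ,
      (K y : ℂ) * ((l : ℂ) + y * h - z)⁻¹ = K y • (((l + y * h : ℝ) : ℂ) - z)⁻¹ := by
    intro l y
    rw [real_smul]
    push_cast
    rfl
  simp_rw [hsmul]
  have hres : Integrable (fun l : ℝ => ((l : ℂ) - z)⁻¹) μ :=
    .of_bound (continuous_inv_ofReal_sub hz).aestronglyMeasurable z.im⁻¹
      (.of_forall (norm_inv_ofReal_sub_le hz))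
  rw [← integral_sub (integrable_integral_smul_inv_ofReal_add_mul_sub hz
    (integrable_of_integral_eq_one hKint) h μ) hres]
  simpa using norm_integral_le_of_norm_le_const (μ := μ) (.of_forall
    (norm_integral_smul_inv_ofReal_add_mul_sub_sub_le hz hKnonneg hKint hh.le hy₀.le htail))

/-- The Stieltjes transform of the kernel-smoothed measure is close to the
Stieltjes transform of the measure itself: if `∫_{|y|>y₀} K ≤ ε` then the two
transforms differ by at most `2ε/Im z + h y₀/(Im z)²`. -/
theorem smoothed_stieltjes_close
    (K : ℝ → ℝ) (hKmeas : Measurable K) (hKnonneg : ∀ x, 0 ≤ K x)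
    (hKint : ∫ x, K x = 1)
    (μ : Measure ℝ) [IsProbabilityMeasure μ]
    (h : ℝ) (hh : 0 < h) (z : ℂ) (hz : 0 < z.im)
    (ε y₀ : ℝ) (hε : 0 < ε) (hy₀ : 0 < y₀)
    (htail : ∫ y in {y : ℝ | y₀ < |y|}, K y ≤ ε) :
    ‖(∫ l : ℝ, (∫ y : ℝ, (K y : ℂ) * ((l : ℂ) + y * h - z)⁻¹) ∂μ)
        - ∫ l : ℝ, ((l : ℂ) - z)⁻¹ ∂μ‖
      ≤ 2 * ε / z.im + h * y₀ / z.im ^ 2 :=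
  smoothed_stieltjes_close_general K hKnonneg hKint μ h hh z hz ε y₀ hy₀ htail
end

section
/- For two n × n real symmetric matrices A and B, the Lévy distance L between their empirical spectral distributions satisfies L^3(F^A, F^B) ≤ (1/n) tr((A − B)^2). -/
/-!
By the Hoffman–Wielandt inequality some matching `σ` of the eigenvalues `λ` of `A` with the
eigenvalues `μ` of `B` has `∑ (λᵢ - μ_{σ i})² ≤ tr((A - B)²)`: writing `tr(AB) = ∑ λᵢ μⱼ Wᵢⱼ²`
with `W` orthogonal, the matrix `(Wᵢⱼ²)` is doubly stochastic, so by Birkhoff's theorem this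
linear form is maximised at a permutation matrix.

Given such a matching, at most `∑ (λᵢ - μ_{σ i})² / ε²` indices have `λᵢ ≤ x` but
`μ_{σ i} > x + ε` (and symmetrically). Hence both Lévy inequalities hold at `ε` up to an error
`tr((A - B)²) / (n ε²)`, which is at most `ε` once `ε³ ≥ tr((A - B)²) / n`.
-/

open MeasureTheory Finset

noncomputable def levyDist (F G : ℝ → ℝ) : ℝ :=
  sInf {ε : ℝ | 0 < ε ∧ ∀ x, F (x - ε) - ε ≤ G x ∧ G x ≤ F (x + ε) + ε}

/-- Empirical spectral distribution function of a Hermitian matrix. -/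
noncomputable def esd {n : ℕ} {A : Matrix (Fin n) (Fin n) ℝ}
    (hA : A.IsHermitian) (x : ℝ) : ℝ :=
  (univ.filter fun i => hA.eigenvalues i ≤ x).card / n

namespace Matrix

variable {ι : Type*} [Fintype ι] [DecidableEq ι]

theorem of_sq_mem_doublyStochastic {W : Matrix ι ι ℝ} (hW : W ∈ unitaryGroup ι ℝ) :
    of (fun i j => W i j ^ 2) ∈ doublyStochastic ℝ ι := by
  rw [mem_doublyStochastic_iff_sum]
  refine ⟨fun i j => sq_nonneg _, fun i => ?_, fun j => ?_⟩
  · simpa [mul_apply, sq] using congr_fun₂ (mem_unitaryGroup_iff.mp hW) i i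
  · simpa [mul_apply, sq] using congr_fun₂ (mem_unitaryGroup_iff'.mp hW) j j

theorem exists_perm_dotProduct_mulVec_le {M : Matrix ι ι ℝ} (hM : M ∈ doublyStochastic ℝ ι)
    (u v : ι → ℝ) : ∃ σ : Equiv.Perm ι, u ⬝ᵥ M *ᵥ v ≤ ∑ i, u i * v (σ i) := by
  let Φ : Matrix ι ι ℝ →ₗ[ℝ] ℝ :=
    { toFun := fun M => u ⬝ᵥ M *ᵥ v
      map_add' := fun M N => by simp [add_mulVec, dotProduct_add]
      map_smul' := fun c M => by simp [smul_mulVec, dotProduct_smul] }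
  rw [← SetLike.mem_coe, doublyStochastic_eq_convexHull_permMatrix] at hM
  obtain ⟨_, ⟨σ, rfl⟩, hσ⟩ :=
    (Φ.convexOn convex_univ).exists_ge_of_mem_convexHull (Set.subset_univ _) hM
  exact ⟨σ, by simpa [Φ, permMatrix_mulVec, dotProduct] using hσ⟩

theorem trace_diagonal_mul_diagonal_mul_star (u v : ι → ℝ) (W : Matrix ι ι ℝ) :
    (diagonal u * W * diagonal v * star W).trace = u ⬝ᵥ of (fun i j => W i j ^ 2) *ᵥ v := by
  simp only [trace, diag_apply, mul_apply (M := diagonal u * W * diagonal v), mul_diagonal,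
    diagonal_mul, star_apply, star_trivial, dotProduct, mulVec, of_apply, Finset.mul_sum]
  refine Finset.sum_congr rfl fun i _ => Finset.sum_congr rfl fun j _ => ?_
  ring

namespace IsHermitian

variable {A B : Matrix ι ι ℝ}

theorem trace_mul_eq_dotProduct (hA : A.IsHermitian) (hB : B.IsHermitian) :
    (A * B).trace = hA.eigenvalues ⬝ᵥ
      of (fun i j => ((star hA.eigenvectorUnitary * hB.eigenvectorUnitary :
        unitaryGroup ι ℝ) : Matrix ι ι ℝ) i j ^ 2) *ᵥ hB.eigenvalues := by
  rw [← trace_diagonal_mul_diagonal_mul_star]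
  conv_lhs => rw [hA.spectral_theorem, hB.spectral_theorem]
  simp only [RCLike.ofReal_real_eq_id, CompTriple.comp_eq, Unitary.conjStarAlgAut_apply,
    Submonoid.coe_mul, Unitary.coe_star, star_mul, star_star, Matrix.mul_assoc]
  rw [trace_mul_comm]
  simp only [Matrix.mul_assoc]

theorem exists_perm_trace_mul_le (hA : A.IsHermitian) (hB : B.IsHermitian) :
    ∃ σ : Equiv.Perm ι, (A * B).trace ≤ ∑ i, hA.eigenvalues i * hB.eigenvalues (σ i) := by
  rw [hA.trace_mul_eq_dotProduct hB]
  exact exists_perm_dotProduct_mulVec_le (of_sq_mem_doublyStochastic (SetLike.coe_mem _)) _ _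

theorem trace_mul_self (hA : A.IsHermitian) : (A * A).trace = ∑ i, hA.eigenvalues i ^ 2 := by
  simp [hA.trace_mul_eq_dotProduct hA, one_apply, dotProduct, mulVec, sq]

theorem exists_perm_sum_sq_sub_eigenvalues_le (hA : A.IsHermitian) (hB : B.IsHermitian) :
    ∃ σ : Equiv.Perm ι,
      ∑ i, (hA.eigenvalues i - hB.eigenvalues (σ i)) ^ 2 ≤ ((A - B) ^ 2).trace := by
  obtain ⟨σ, hσ⟩ := hA.exists_perm_trace_mul_le hB
  refine ⟨σ, ?_⟩
  have htrace : ((A - B) ^ 2).trace = (A * A).trace - 2 * (A * B).trace + (B * B).trace := by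
    rw [sq, sub_mul, mul_sub, mul_sub, trace_sub, trace_sub, trace_sub, trace_mul_comm B A]
    ring
  have hsum : ∑ i, hB.eigenvalues (σ i) ^ 2 = ∑ i, hB.eigenvalues i ^ 2 :=
    Equiv.sum_comp σ fun i => hB.eigenvalues i ^ 2
  simp only [sub_sq, Finset.sum_add_distrib, Finset.sum_sub_distrib, mul_assoc, ← Finset.mul_sum]
  rw [htrace, hA.trace_mul_self, hB.trace_mul_self, hsum]
  linarith

end IsHermitian

end Matrix

theorem card_filter_le_card_filter_add_sum_sq_div {ι κ : Type*} [Fintype ι] [Fintype κ]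
    (f : ι → ℝ) (g : κ → ℝ) (e : ι ≃ κ) {ε : ℝ} (hε : 0 < ε) (x : ℝ) :
    (#{i | f i ≤ x} : ℝ) ≤ #{k | g k ≤ x + ε} + (∑ i, (f i - g (e i)) ^ 2) / ε ^ 2 := by
  rw [natCast_card_filter, natCast_card_filter, ← e.sum_comp, sum_div, ← sum_add_distrib]
  refine sum_le_sum fun i _ => ?_
  split_ifs with hf hg
  · simpa using div_nonneg (sq_nonneg (f i - g (e i))) (sq_nonneg ε)
  · rw [zero_add, one_le_div₀ (by positivity)]
    nlinarith
  · positivity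
  · positivity

theorem levyDist_nonneg (F G : ℝ → ℝ) : 0 ≤ levyDist F G :=
  Real.sInf_nonneg fun _ h => h.1.le

theorem levyDist_le {F G : ℝ → ℝ} {r : ℝ} (hr : 0 ≤ r)
    (h : ∀ ε, r < ε → ∀ x, F (x - ε) - ε ≤ G x ∧ G x ≤ F (x + ε) + ε) :
    levyDist F G ≤ r :=
  le_of_forall_pos_le_add fun δ hδ =>
    csInf_le ⟨0, fun _ h => h.1.le⟩ ⟨by positivity, h _ (by linarith)⟩

theorem levyDist_pow_le {F G : ℝ → ℝ} {k : ℕ} (hk : k ≠ 0) {D : ℝ} (hD : 0 ≤ D)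
    (h : ∀ ε > 0, D ≤ ε ^ k → ∀ x, F (x - ε) - ε ≤ G x ∧ G x ≤ F (x + ε) + ε) :
    levyDist F G ^ k ≤ D := by
  set r := D ^ (k⁻¹ : ℝ)
  have hr : 0 ≤ r := Real.rpow_nonneg hD _
  have hrk : r ^ k = D := Real.rpow_inv_natCast_pow hD hk
  have hle : levyDist F G ≤ r := levyDist_le hr fun ε hε =>
    h ε (hr.trans_lt hε) (hrk ▸ pow_le_pow_left₀ hr hε.le k)
  exact hrk ▸ pow_le_pow_left₀ (levyDist_nonneg F G) hle k

section

variable {n : ℕ} {A B : Matrix (Fin n) (Fin n) ℝ}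

theorem esd_le_esd_add_sum_sq_div (hA : A.IsHermitian) (hB : B.IsHermitian)
    (σ : Equiv.Perm (Fin n)) {ε : ℝ} (hε : 0 < ε) (x : ℝ) :
    esd hA x ≤ esd hB (x + ε) +
      (∑ i, (hA.eigenvalues i - hB.eigenvalues (σ i)) ^ 2) / n / ε ^ 2 := by
  calc esd hA x
      ≤ (#{i | hB.eigenvalues i ≤ x + ε} +
          (∑ i, (hA.eigenvalues i - hB.eigenvalues (σ i)) ^ 2) / ε ^ 2) / n := by
        unfold esd
        gcongr
        exact card_filter_le_card_filter_add_sum_sq_div _ _ σ hε x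
    _ = _ := by unfold esd; ring

theorem esd_le_esd_add_sum_sq_div' (hA : A.IsHermitian) (hB : B.IsHermitian)
    (σ : Equiv.Perm (Fin n)) {ε : ℝ} (hε : 0 < ε) (x : ℝ) :
    esd hB x ≤ esd hA (x + ε) +
      (∑ i, (hA.eigenvalues i - hB.eigenvalues (σ i)) ^ 2) / n / ε ^ 2 := by
  have hsum : ∑ i, (hB.eigenvalues i - hA.eigenvalues (σ.symm i)) ^ 2 =
      ∑ i, (hA.eigenvalues i - hB.eigenvalues (σ i)) ^ 2 := by
    rw [← Equiv.sum_comp σ]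
    simp [sub_sq_comm]
  simpa [hsum] using esd_le_esd_add_sum_sq_div hB hA σ.symm hε x

end

theorem levyDist_cube_le_trace_sq_general {n : ℕ}
    (A B : Matrix (Fin n) (Fin n) ℝ)
    (hA : A.IsHermitian) (hB : B.IsHermitian) :
    levyDist (esd hA) (esd hB) ^ 3 ≤ (1 / n) * ((A - B) ^ 2).trace := by
  obtain ⟨σ, hσ⟩ := hA.exists_perm_sum_sq_sub_eigenvalues_le hB
  set S := ∑ i, (hA.eigenvalues i - hB.eigenvalues (σ i)) ^ 2
  have hS : S / n ≤ 1 / n * ((A - B) ^ 2).trace := by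
    rw [← one_div_mul_eq_div (n : ℝ) S]
    gcongr
  refine levyDist_pow_le three_ne_zero ((div_nonneg (by positivity) n.cast_nonneg).trans hS)
    fun ε hε hεD x => ?_
  have hsmall : S / n / ε ^ 2 ≤ ε := by
    rw [div_le_iff₀ (by positivity)]
    linarith [show ε * ε ^ 2 = ε ^ 3 by ring]
  exact ⟨by linarith [sub_add_cancel x ε ▸ esd_le_esd_add_sum_sq_div hA hB σ hε (x - ε)],
    by linarith [esd_le_esd_add_sum_sq_div' hA hB σ hε x]⟩

/-- For `n × n` real symmetric matrices `A` and `B`, the Lévy distance between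
their empirical spectral distributions satisfies
`L³(F^A, F^B) ≤ (1/n) tr((A − B)²)`. -/
theorem levyDist_cube_le_trace_sq {n : ℕ} (hn : 0 < n)
    (A B : Matrix (Fin n) (Fin n) ℝ)
    (hA : A.IsHermitian) (hB : B.IsHermitian) :
    levyDist (esd hA) (esd hB) ^ 3 ≤ (1 / n) * ((A - B) ^ 2).trace :=
  levyDist_cube_le_trace_sq_general A B hA hB
end

section
/- For two n × n real symmetric matrices A and B, the Kolmogorov (sup-norm) distance between their empirical spectral distributions satisfies ‖F^A − F^B‖_∞ ≤ rank(A − B)/n. -/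
/-! If `#{i | λᵢ(A) ≤ x} > #{i | λᵢ(B) ≤ x} + rank (A - B)`, then the span of the eigenvectors
of `A` with eigenvalue `≤ x`, the span of the eigenvectors of `B` with eigenvalue `> x`, and
`ker (A - B)` have dimensions adding up to more than `2n`, so they share a vector `v ≠ 0`.
On it `⟪v, A v⟫ ≤ x ‖v‖² < ⟪v, B v⟫ = ⟪v, A v⟫`, which is absurd. Exchanging `A` and `B`
bounds the difference of the two counts in both directions. -/

open MeasureTheory Finset

open Module Submodule
open scoped InnerProductSpace

theorem Submodule.finrank_add_finrank_add_finrank_le_of_disjoint {K V : Type*} [DivisionRing K]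
    [AddCommGroup V] [Module K V] [FiniteDimensional K V] {U W₁ W₂ : Submodule K V}
    (h : Disjoint U (W₁ ⊓ W₂)) :
    finrank K U + finrank K W₁ + finrank K W₂ ≤ 2 * finrank K V := by
  have hU := finrank_add_finrank_le_of_disjoint h
  have hW := finrank_sup_add_finrank_inf_eq W₁ W₂
  have hsup := (W₁ ⊔ W₂).finrank_le
  omega

namespace OrthonormalBasis

variable {𝕜 E ι : Type*} [RCLike 𝕜] [NormedAddCommGroup E] [InnerProductSpace 𝕜 E] [Fintype ι]

theorem finrank_span_image (b : OrthonormalBasis ι 𝕜 E) (s : Finset ι) :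
    finrank 𝕜 (span 𝕜 (b '' s)) = #s := by
  rw [Set.image_eq_range]
  exact (finrank_span_eq_card
    (b.orthonormal.linearIndependent.comp _ Subtype.coe_injective)).trans (by simp)

theorem repr_eq_zero_of_mem_span_image (b : OrthonormalBasis ι 𝕜 E) {s : Set ι} {v : E}
    (hv : v ∈ span 𝕜 (b '' s)) {i : ι} (hi : i ∉ s) : b.repr v i = 0 := by
  rw [← b.coe_toBasis, Basis.mem_span_image] at hv
  rw [← b.coe_toBasis_repr_apply]
  exact Finsupp.notMem_support_iff.1 fun h => hi (hv h)

variable {T : E →ₗ[𝕜] E} {μ : ι → ℝ}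

theorem repr_map_apply_of_eigen (b : OrthonormalBasis ι 𝕜 E)
    (hT : ∀ i, T (b i) = (μ i : 𝕜) • b i) (v : E) (i : ι) : b.repr (T v) i = μ i * b.repr v i := by
  classical
  conv_lhs => rw [← b.sum_repr v]
  simp [map_sum, hT, b.repr_self, Pi.single_apply, RCLike.real_smul_eq_coe_mul, mul_comm]

theorem re_inner_apply_self_sub_eq_sum (b : OrthonormalBasis ι 𝕜 E)
    (hT : ∀ i, T (b i) = (μ i : 𝕜) • b i) (v : E) (x : ℝ) :
    RCLike.re ⟪v, T v⟫_𝕜 - x * ‖v‖ ^ 2 = ∑ i, (μ i - x) * ‖b.repr v i‖ ^ 2 := by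
  have hquad : RCLike.re ⟪v, T v⟫_𝕜 = ∑ i, μ i * ‖b.repr v i‖ ^ 2 := by
    rw [← b.repr.inner_map_map, PiLp.inner_apply, map_sum]
    refine sum_congr rfl fun i _ => ?_
    rw [b.repr_map_apply_of_eigen hT, RCLike.inner_apply, mul_assoc, RCLike.mul_conj]
    norm_cast
  have hnorm : ‖v‖ ^ 2 = ∑ i, ‖b.repr v i‖ ^ 2 := by
    rw [← b.repr.norm_map, EuclideanSpace.norm_sq_eq]
  simp only [hquad, hnorm, mul_sum, ← sum_sub_distrib, sub_mul]

theorem re_inner_apply_self_le_of_mem_span (b : OrthonormalBasis ι 𝕜 E)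
    (hT : ∀ i, T (b i) = (μ i : 𝕜) • b i) {x : ℝ} {s : Set ι} (hs : ∀ i ∈ s, μ i ≤ x) {v : E}
    (hv : v ∈ span 𝕜 (b '' s)) : RCLike.re ⟪v, T v⟫_𝕜 ≤ x * ‖v‖ ^ 2 := by
  suffices ∑ i, (μ i - x) * ‖b.repr v i‖ ^ 2 ≤ 0 by
    linarith [b.re_inner_apply_self_sub_eq_sum hT v x]
  refine sum_nonpos fun i _ => ?_
  by_cases hi : i ∈ s
  · exact mul_nonpos_of_nonpos_of_nonneg (sub_nonpos.2 (hs i hi)) (by positivity)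
  · simp [b.repr_eq_zero_of_mem_span_image hv hi]

theorem lt_re_inner_apply_self_of_mem_span (b : OrthonormalBasis ι 𝕜 E)
    (hT : ∀ i, T (b i) = (μ i : 𝕜) • b i) {x : ℝ} {s : Set ι} (hs : ∀ i ∈ s, x < μ i) {v : E}
    (hv : v ∈ span 𝕜 (b '' s)) (hv₀ : v ≠ 0) : x * ‖v‖ ^ 2 < RCLike.re ⟪v, T v⟫_𝕜 := by
  obtain ⟨j, hj⟩ : ∃ j, b.repr v j ≠ 0 := by
    by_contra! h
    exact hv₀ (b.repr.injective (by ext j; simp [h]))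
  have hjs : j ∈ s := by_contra fun h => hj (b.repr_eq_zero_of_mem_span_image hv h)
  suffices 0 < ∑ i, (μ i - x) * ‖b.repr v i‖ ^ 2 by
    linarith [b.re_inner_apply_self_sub_eq_sum hT v x]
  refine sum_pos' (fun i _ => ?_) ⟨j, mem_univ j, ?_⟩
  · by_cases hi : i ∈ s
    · exact mul_nonneg (sub_nonneg.2 (hs i hi).le) (by positivity)
    · simp [b.repr_eq_zero_of_mem_span_image hv hi]
  · have := sub_pos.2 (hs j hjs)
    positivity

end OrthonormalBasis

section Eigenbases

variable {𝕜 E ι κ : Type*} [RCLike 𝕜] [NormedAddCommGroup E] [InnerProductSpace 𝕜 E]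
  [Fintype ι] [Fintype κ] {T S : E →ₗ[𝕜] E} {μ : ι → ℝ} {ν : κ → ℝ}

theorem card_eigenvalues_le_le_add_finrank_range_sub (b : OrthonormalBasis ι 𝕜 E)
    (c : OrthonormalBasis κ 𝕜 E) (hT : ∀ i, T (b i) = (μ i : 𝕜) • b i)
    (hS : ∀ j, S (c j) = (ν j : 𝕜) • c j) (x : ℝ) :
    #{i | μ i ≤ x} ≤ #{j | ν j ≤ x} + finrank 𝕜 (LinearMap.range (T - S)) := by
  have : FiniteDimensional 𝕜 E := b.toBasis.finiteDimensional_of_finite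
  have hdisj : Disjoint (span 𝕜 (b '' ({i | μ i ≤ x} : Finset ι)))
      (span 𝕜 (c '' ({j | x < ν j} : Finset κ)) ⊓ LinearMap.ker (T - S)) := by
    refine disjoint_def.2 fun v hv ⟨hw, hker⟩ => by_contra fun hv₀ => ?_
    have hTS : T v = S v := sub_eq_zero.1 (LinearMap.mem_ker.1 hker)
    have hle := b.re_inner_apply_self_le_of_mem_span hT (x := x) (by simp) hv
    have hlt := c.lt_re_inner_apply_self_of_mem_span hS (x := x) (by simp) hw hv₀
    rw [hTS] at hle
    linarith
  have hdim := finrank_add_finrank_add_finrank_le_of_disjoint hdisj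
  rw [b.finrank_span_image, c.finrank_span_image] at hdim
  have hrank := LinearMap.finrank_range_add_finrank_ker (T - S)
  have hcard := card_filter_add_card_filter_not (s := univ) (p := fun j => ν j ≤ x)
  simp only [not_le, card_univ, ← finrank_eq_card_basis c.toBasis] at hcard
  omega

end Eigenbases

namespace Matrix

section Rank

variable {m n R : Type*} [Fintype n] [CommRing R]

theorem rank_neg (A : Matrix m n R) : (-A).rank = A.rank := by
  simpa using A.rank_smul_of_mem_nonZeroDivisors isUnit_one.neg.mem_nonZeroDivisors

theorem rank_sub_comm (A B : Matrix m n R) : (A - B).rank = (B - A).rank := by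
  rw [← neg_sub, rank_neg]

theorem rank_eq_finrank_range_toLpLin [Finite m] [DecidableEq n] (p q : ENNReal)
    (A : Matrix m n R) : A.rank = finrank R (LinearMap.range (toLpLin p q A)) := by
  rw [toLpLin_eq_toLin]
  exact A.rank_eq_finrank_range_toLin _ _

end Rank

variable {𝕜 n : Type*} [RCLike 𝕜] [Fintype n] [DecidableEq n]

theorem IsHermitian.toEuclideanLin_eigenvectorBasis {A : Matrix n n 𝕜} (hA : A.IsHermitian)
    (i : n) :
    toEuclideanLin A (hA.eigenvectorBasis i) = (hA.eigenvalues i : 𝕜) • hA.eigenvectorBasis i := by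
  apply WithLp.ofLp_injective
  simp only [ofLp_toLpLin, toLin'_apply, hA.mulVec_eigenvectorBasis, WithLp.ofLp_smul,
    RCLike.real_smul_eq_coe_smul (K := 𝕜)]

theorem IsHermitian.card_eigenvalues_le_le_add_rank_sub {A B : Matrix n n 𝕜}
    (hA : A.IsHermitian) (hB : B.IsHermitian) (x : ℝ) :
    #{i | hA.eigenvalues i ≤ x} ≤ #{i | hB.eigenvalues i ≤ x} + (A - B).rank := by
  rw [rank_eq_finrank_range_toLpLin 2 2, map_sub]
  exact card_eigenvalues_le_le_add_finrank_range_sub _ _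
    hA.toEuclideanLin_eigenvectorBasis hB.toEuclideanLin_eigenvectorBasis x

end Matrix

theorem esd_sup_dist_le_rank_general {n : ℕ}
    (A B : Matrix (Fin n) (Fin n) ℝ)
    (hA : A.IsHermitian) (hB : B.IsHermitian) :
    ∀ x : ℝ, |esd hA x - esd hB x| ≤ (A - B).rank / n := by
  intro x
  have hAB := hA.card_eigenvalues_le_le_add_rank_sub hB x
  have hBA := hB.card_eigenvalues_le_le_add_rank_sub hA x
  rw [← Matrix.rank_sub_comm] at hBA
  rw [esd, esd, ← sub_div, abs_div, Nat.abs_cast]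
  gcongr
  rw [abs_sub_le_iff, sub_le_iff_le_add', sub_le_iff_le_add']
  exact ⟨mod_cast hAB, mod_cast hBA⟩

/-- For `n × n` real symmetric matrices `A` and `B`, the Kolmogorov distance
between their empirical spectral distributions is bounded by
`rank(A − B)/n`. -/
theorem esd_sup_dist_le_rank {n : ℕ} (hn : 0 < n)
    (A B : Matrix (Fin n) (Fin n) ℝ)
    (hA : A.IsHermitian) (hB : B.IsHermitian) :
    ∀ x : ℝ, |esd hA x - esd hB x| ≤ (A - B).rank / n :=
  esd_sup_dist_le_rank_general A B hA hB
end

section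
/- If l(x) = E[|X|^2 1_{|X| ≤ x}] is slowly varying with E|X|^2 = ∞, E X = 0, and b_n = inf{x ≥ b+1 : n l(x) ≤ x^2}, then Var(X 1_{|X| ≤ b_n}) = l(b_n)(1 + o(1/n)) as n → ∞. -/
/-!
Because `X² = |X|²`, the difference `V n - l (b n)` is `-m (b n) ^ 2`, where
`m x = E[X; |X| ≤ x] = -E[X; |X| > x]` since `E X = 0`. Slow variation gives
`l (2y) ≤ (1 + θ) l y` for large `y`; on the dyadic shell `2ᵏx < |X| ≤ 2ᵏ⁺¹x` one has
`|X| ≤ |X|² / (2ᵏx)`, so summing over the shells gives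
`E[|X|; |X| > x] ≤ 2θ / (1 - θ) · l x / x`, i.e. `m x = o(l x / x)`. The infimum `b n` still
satisfies `n l (b n) ≤ b n ²`, hence `m (b n)² = o(l (b n)² / b n²) = o(l (b n) / n)`; and
`b n → ∞` because `n l (b₀ + 1) ≤ n l (b n) ≤ b n ²` with `l (b₀ + 1) > 0`.
-/

open MeasureTheory ProbabilityTheory Filter Asymptotics
open Set Topology
open scoped Function

section Real

variable {x : ℝ}

theorem iUnion_Ioc_two_pow_mul (hx : 0 < x) :
    ⋃ k : ℕ, Ioc (2 ^ k * x) (2 ^ (k + 1) * x) = Ioi x := by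
  refine subset_antisymm (iUnion_subset fun k t ht => ?_) fun t ht => ?_
  · exact lt_of_le_of_lt (le_mul_of_one_le_left hx.le (one_le_pow₀ one_le_two)) ht.1
  · obtain ⟨n, hn⟩ := exists_mem_Ioc_zpow (div_pos (hx.trans ht) hx) one_lt_two
    have hn0 : 0 ≤ n := by
      by_contra! hneg
      have : (2 : ℝ) ^ (n + 1) ≤ 1 := zpow_le_one_of_nonpos₀ one_le_two (by omega)
      exact absurd (hn.2.trans this) (not_le.mpr ((one_lt_div hx).mpr ht))
    lift n to ℕ using hn0
    refine mem_iUnion.mpr ⟨n, ?_⟩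
    rw [mem_Ioc, lt_div_iff₀ hx, div_le_iff₀ hx] at hn
    exact_mod_cast hn

theorem pairwise_disjoint_Ioc_two_pow_mul (hx : 0 ≤ x) :
    Pairwise (Disjoint on fun k : ℕ => Ioc (2 ^ k * x) (2 ^ (k + 1) * x)) :=
  (pairwise_disjoint_on _).mpr fun _ _ hkj => Ioc_disjoint_Ioc_of_le
    (mul_le_mul_of_nonneg_right (pow_le_pow_right₀ one_le_two hkj) hx)

theorem le_pow_mul_of_doubling {f : ℝ → ℝ} {c x₀ : ℝ} (hc : 0 ≤ c)
    (hf : ∀ y, x₀ ≤ y → f (2 * y) ≤ c * f y) (hx : x₀ ≤ x) (hx0 : 0 ≤ x) (k : ℕ) :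
    f (2 ^ k * x) ≤ c ^ k * f x := by
  induction k with
  | zero => simp
  | succ k ih =>
    have hk : x₀ ≤ 2 ^ k * x := hx.trans (le_mul_of_one_le_left hx0 (one_le_pow₀ one_le_two))
    calc f (2 ^ (k + 1) * x) = f (2 * (2 ^ k * x)) := by ring_nf
      _ ≤ c * f (2 ^ k * x) := hf _ hk
      _ ≤ c * (c ^ k * f x) := mul_le_mul_of_nonneg_left ih hc
      _ = c ^ (k + 1) * f x := by ring

theorem eventually_le_one_add_mul_of_tendsto_div {f : ℝ → ℝ} {c θ : ℝ}
    (hf : Tendsto (fun x => f (c * x) / f x) atTop (𝓝 1)) (hpos : ∀ᶠ x in atTop, 0 < f x)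
    (hθ : 0 < θ) : ∀ᶠ x in atTop, f (c * x) ≤ (1 + θ) * f x := by
  filter_upwards [hf.eventually (eventually_le_nhds (by linarith : (1 : ℝ) < 1 + θ)), hpos]
    with x hratio hfx
  rwa [div_le_iff₀ hfx] at hratio

end Real

section TruncatedMoments

variable {Ω : Type*} [MeasurableSpace Ω] {μ : Measure Ω} {X Y : Ω → ℝ} {x y θ : ℝ}

noncomputable def truncSqMoment (μ : Measure Ω) (X : Ω → ℝ) (x : ℝ) : ℝ :=
  ∫ ω in {ω | |X ω| ≤ x}, |X ω| ^ 2 ∂μ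

noncomputable def truncMean (μ : Measure Ω) (X : Ω → ℝ) (x : ℝ) : ℝ :=
  ∫ ω in {ω | |X ω| ≤ x}, X ω ∂μ

theorem setIntegral_setOf_abs_le_congr (hXY : X =ᵐ[μ] Y) {f g : Ω → ℝ} (hfg : f =ᵐ[μ] g)
    (x : ℝ) : ∫ ω in {ω | |X ω| ≤ x}, f ω ∂μ = ∫ ω in {ω | |Y ω| ≤ x}, g ω ∂μ := by
  have hset : {ω | |X ω| ≤ x} =ᵐ[μ] {ω | |Y ω| ≤ x} := by
    rw [eventuallyEq_set]
    filter_upwards [hXY] with ω hω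
    simp only [hω]
  rw [setIntegral_congr_set hset]
  exact integral_congr_ae (ae_restrict_of_ae hfg)

theorem truncSqMoment_congr (hXY : X =ᵐ[μ] Y) : truncSqMoment μ X = truncSqMoment μ Y :=
  funext <| setIntegral_setOf_abs_le_congr hXY (hXY.fun_comp fun t => |t| ^ 2)

theorem truncMean_congr (hXY : X =ᵐ[μ] Y) : truncMean μ X = truncMean μ Y :=
  funext <| setIntegral_setOf_abs_le_congr hXY hXY

theorem truncSqMoment_nonneg (x : ℝ) : 0 ≤ truncSqMoment μ X x :=
  integral_nonneg fun _ => by positivity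

theorem measurableSet_setOf_abs_le (hX : Measurable X) (x : ℝ) :
    MeasurableSet {ω | |X ω| ≤ x} :=
  measurableSet_le hX.abs measurable_const

variable [IsFiniteMeasure μ]

theorem integrableOn_setOf_abs_le (hX : Measurable X) (x : ℝ) :
    IntegrableOn X {ω | |X ω| ≤ x} μ :=
  Measure.integrableOn_of_bounded (measure_ne_top _ _) hX.aestronglyMeasurable
    ((ae_restrict_mem (measurableSet_setOf_abs_le hX _)).mono fun _ h => h)

theorem integrableOn_sq_abs_setOf_abs_le (hX : Measurable X) (x : ℝ) :
    IntegrableOn (fun ω => |X ω| ^ 2) {ω | |X ω| ≤ x} μ := by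
  refine Measure.integrableOn_of_bounded (M := x ^ 2) (measure_ne_top _ _)
    (hX.abs.pow_const 2).aestronglyMeasurable ?_
  filter_upwards [ae_restrict_mem (measurableSet_setOf_abs_le hX _)] with ω hω
  rw [Real.norm_of_nonneg (by positivity)]
  exact pow_le_pow_left₀ (abs_nonneg _) hω 2

theorem truncSqMoment_mono (hX : Measurable X) : Monotone (truncSqMoment μ X) :=
  fun _ y hxy => setIntegral_mono_set (integrableOn_sq_abs_setOf_abs_le hX y)
    (ae_of_all _ fun _ => by positivity) (ae_of_all _ fun _ h => le_trans h hxy)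

theorem truncSqMoment_sub (hX : Measurable X) (hxy : x ≤ y) :
    truncSqMoment μ X y - truncSqMoment μ X x = ∫ ω in {ω | |X ω| ∈ Ioc x y}, |X ω| ^ 2 ∂μ := by
  have hsplit : {ω | |X ω| ≤ y} = {ω | |X ω| ≤ x} ∪ {ω | |X ω| ∈ Ioc x y} :=
    congrArg (fun s => (fun ω => |X ω|) ⁻¹' s) (Iic_union_Ioc_eq_Iic hxy).symm
  have hint := integrableOn_sq_abs_setOf_abs_le hX (μ := μ) y
  rw [hsplit] at hint
  have hdisj : Disjoint {ω | |X ω| ≤ x} {ω | |X ω| ∈ Ioc x y} :=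
    (Iic_disjoint_Ioc (le_refl x)).preimage (fun ω => |X ω|)
  have hmeas : MeasurableSet {ω | |X ω| ∈ Ioc x y} := hX.abs measurableSet_Ioc
  rw [truncSqMoment, truncSqMoment, hsplit, setIntegral_union hdisj hmeas
    (hint.mono_set subset_union_left) (hint.mono_set subset_union_right)]
  ring

theorem mul_setIntegral_abs_Ioc_le (hX : Measurable X) (hxy : x ≤ y) :
    x * ∫ ω in {ω | |X ω| ∈ Ioc x y}, |X ω| ∂μ ≤ truncSqMoment μ X y - truncSqMoment μ X x := by
  have hint : IntegrableOn (fun ω => |X ω| ^ 2) {ω | |X ω| ∈ Ioc x y} μ :=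
    (integrableOn_sq_abs_setOf_abs_le hX y).mono_set fun _ h => h.2
  rw [truncSqMoment_sub hX hxy, ← integral_const_mul]
  refine setIntegral_mono_on
    (((integrableOn_setOf_abs_le hX y).mono_set fun _ h => h.2).abs.const_mul x) hint
    (hX.abs measurableSet_Ioc) fun ω hω => ?_
  rw [sq]
  exact mul_le_mul_of_nonneg_right hω.1.le (abs_nonneg _)

theorem tendsto_truncSqMoment_atTop (hX : Measurable X)
    (hinf : ¬Integrable (fun ω => |X ω| ^ 2) μ) : Tendsto (truncSqMoment μ X) atTop atTop := by
  refine (truncSqMoment_mono hX).tendsto_atTop_atTop fun M => ?_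
  by_contra! hbdd
  have hcover : AECover μ atTop fun n : ℕ => {ω | |X ω| ≤ n} :=
    ⟨ae_of_all _ fun ω => eventually_ge_atTop ⌈|X ω|⌉₊ |>.mono fun _ hn =>
      (Nat.le_ceil _).trans (Nat.cast_le.mpr hn),
     fun n => measurableSet_setOf_abs_le hX n⟩
  refine hinf (hcover.integrable_of_integral_norm_bounded M
    (fun n => integrableOn_sq_abs_setOf_abs_le hX n) (Eventually.of_forall fun n => ?_))
  simp only [Real.norm_of_nonneg (sq_nonneg _)]
  exact (hbdd n).le

theorem tendsto_truncSqMoment_div_sq (hX : Measurable X) :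
    Tendsto (fun x => truncSqMoment μ X x / x ^ 2) atTop (𝓝 0) := by
  have hind : ∀ x, truncSqMoment μ X x / x ^ 2
      = ∫ ω, {ω | |X ω| ≤ x}.indicator (fun ω => |X ω| ^ 2 / x ^ 2) ω ∂μ := fun x => by
    rw [integral_indicator (measurableSet_setOf_abs_le hX _), truncSqMoment,
      integral_div]
  simp_rw [hind]
  rw [← integral_zero Ω ℝ (μ := μ)]
  refine tendsto_integral_filter_of_dominated_convergence (fun _ => 1) ?_ ?_
    (integrable_const 1) (ae_of_all _ fun ω => ?_)
  · exact Eventually.of_forall fun x => (((hX.abs.pow_const 2).div_const _).indicator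
      (measurableSet_setOf_abs_le hX _)).aestronglyMeasurable
  · filter_upwards [eventually_gt_atTop 0] with x hx
    refine ae_of_all _ fun ω => ?_
    by_cases hω : ω ∈ {ω | |X ω| ≤ x}
    · rw [indicator_of_mem hω, Real.norm_of_nonneg (by positivity), div_le_one (by positivity)]
      exact pow_le_pow_left₀ (abs_nonneg _) hω 2
    · rw [indicator_of_notMem hω, norm_zero]
      exact zero_le_one
  · have hlim : Tendsto (fun x : ℝ => |X ω| ^ 2 / x ^ 2) atTop (𝓝 0) :=
      tendsto_const_nhds.div_atTop (tendsto_pow_atTop two_ne_zero)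
    refine hlim.congr' ?_
    filter_upwards [eventually_ge_atTop |X ω|] with x hx
    exact (indicator_of_mem (show ω ∈ {ω | |X ω| ≤ x} from hx) fun ω => |X ω| ^ 2 / x ^ 2).symm

theorem setIntegral_abs_dyadic_le (hX : Measurable X) (hx : 0 < x) (hθ : 0 ≤ θ)
    (hdouble : ∀ y, x ≤ y → truncSqMoment μ X (2 * y) ≤ (1 + θ) * truncSqMoment μ X y)
    (k : ℕ) :
    ∫ ω in {ω | |X ω| ∈ Ioc (2 ^ k * x) (2 ^ (k + 1) * x)}, |X ω| ∂μ
      ≤ θ * (truncSqMoment μ X x / x) * ((1 + θ) / 2) ^ k := by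
  have hy : 0 < 2 ^ k * x := by positivity
  have hk : x ≤ 2 ^ k * x := le_mul_of_one_le_left hx.le (one_le_pow₀ one_le_two)
  have htwice : 2 ^ (k + 1) * x = 2 * (2 ^ k * x) := by ring
  have hann := mul_setIntegral_abs_Ioc_le hX (μ := μ) (show 2 ^ k * x ≤ 2 ^ (k + 1) * x by linarith)
  have hstep := hdouble _ hk
  have hgrow := le_pow_mul_of_doubling (by linarith) hdouble le_rfl hx.le k
  rw [htwice] at hann ⊢
  calc ∫ ω in {ω | |X ω| ∈ Ioc (2 ^ k * x) (2 * (2 ^ k * x))}, |X ω| ∂μ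
      ≤ θ * truncSqMoment μ X (2 ^ k * x) / (2 ^ k * x) := by
        rw [le_div_iff₀ hy]; linarith
    _ ≤ θ * ((1 + θ) ^ k * truncSqMoment μ X x) / (2 ^ k * x) := by gcongr
    _ = θ * (truncSqMoment μ X x / x) * ((1 + θ) / 2) ^ k := by
        rw [div_pow]; field_simp

theorem integrableOn_and_setIntegral_abs_gt_le (hX : Measurable X) (hx : 0 < x) (hθ : 0 ≤ θ)
    (hθ1 : θ < 1)
    (hdouble : ∀ y, x ≤ y → truncSqMoment μ X (2 * y) ≤ (1 + θ) * truncSqMoment μ X y) :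
    IntegrableOn X {ω | x < |X ω|} μ ∧
      ∫ ω in {ω | x < |X ω|}, |X ω| ∂μ ≤ 2 * θ / (1 - θ) * (truncSqMoment μ X x / x) := by
  set A : ℕ → Set Ω := fun k => {ω | |X ω| ∈ Ioc (2 ^ k * x) (2 ^ (k + 1) * x)}
  have hA : ⋃ k, A k = {ω | x < |X ω|} := by
    change ⋃ k, (fun ω => |X ω|) ⁻¹' _ = (fun ω => |X ω|) ⁻¹' Ioi x
    rw [← preimage_iUnion, iUnion_Ioc_two_pow_mul hx]
  have hgeom : HasSum (fun k : ℕ => θ * (truncSqMoment μ X x / x) * ((1 + θ) / 2) ^ k)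
      (θ * (truncSqMoment μ X x / x) * (1 - (1 + θ) / 2)⁻¹) :=
    (hasSum_geometric_of_lt_one (by linarith) (by linarith)).mul_left _
  have hbound := setIntegral_abs_dyadic_le hX hx hθ hdouble (μ := μ)
  have hsum : Summable fun k => ∫ ω in A k, |X ω| ∂μ :=
    .of_nonneg_of_le (fun _ => integral_nonneg fun _ => abs_nonneg _) hbound hgeom.summable
  have hint : IntegrableOn X {ω | x < |X ω|} μ := hA ▸
    integrableOn_iUnion_of_summable_integral_norm
      (fun k => (integrableOn_setOf_abs_le hX _).mono_set fun _ h => h.2) hsum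
  refine ⟨hint, ?_⟩
  have hdisj : Pairwise (Disjoint on A) :=
    (pairwise_disjoint_Ioc_two_pow_mul hx.le).mono fun _ _ h => h.preimage _
  rw [← hA, integral_iUnion (s := A) (fun _ => hX.abs measurableSet_Ioc) hdisj (hA ▸ hint.abs)]
  calc ∑' k, ∫ ω in A k, |X ω| ∂μ
      ≤ ∑' k : ℕ, θ * (truncSqMoment μ X x / x) * ((1 + θ) / 2) ^ k :=
        hsum.tsum_le_tsum hbound hgeom.summable
    _ = 2 * θ / (1 - θ) * (truncSqMoment μ X x / x) := by
        rw [hgeom.tsum_eq]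
        field_simp
        ring

theorem abs_truncMean_le (hX : Measurable X) (hmean : ∫ ω, X ω ∂μ = 0)
    (htail : IntegrableOn X {ω | x < |X ω|} μ) :
    |truncMean μ X x| ≤ ∫ ω in {ω | x < |X ω|}, |X ω| ∂μ := by
  have hcompl : {ω | |X ω| ≤ x}ᶜ = {ω | x < |X ω|} := by
    ext ω; exact not_le (a := |X ω|)
  have hint : Integrable X μ := by
    rw [← integrableOn_univ, ← union_compl_self {ω | |X ω| ≤ x}, hcompl]
    exact (integrableOn_setOf_abs_le hX x).union htail
  have hsplit := integral_add_compl (measurableSet_setOf_abs_le hX x) hint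
  rw [hmean, hcompl, add_eq_zero_iff_eq_neg] at hsplit
  rw [truncMean, hsplit, abs_neg]
  exact abs_integral_le_integral_abs

theorem truncMean_isLittleO (hX : Measurable X) (hmean : ∫ ω, X ω ∂μ = 0)
    (hslow : Tendsto (fun x => truncSqMoment μ X (2 * x) / truncSqMoment μ X x) atTop (𝓝 1))
    (hpos : ∀ᶠ x in atTop, 0 < truncSqMoment μ X x) :
    truncMean μ X =o[atTop] fun x => truncSqMoment μ X x / x := by
  refine isLittleO_iff.mpr fun c hc => ?_
  set θ := c / (c + 2)
  have hθ : 0 < θ := by positivity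
  have hθ1 : θ < 1 := (div_lt_one (by linarith)).mpr (by linarith)
  have hθc : 2 * θ / (1 - θ) = c := by
    simp only [θ]; field_simp; ring
  obtain ⟨x₀, hx₀⟩ := eventually_atTop.mp (eventually_le_one_add_mul_of_tendsto_div hslow hpos hθ)
  filter_upwards [eventually_gt_atTop 0, eventually_ge_atTop x₀] with x hx hxx₀
  obtain ⟨htail_int, htail⟩ := integrableOn_and_setIntegral_abs_gt_le hX hx hθ.le hθ1
    fun y hy => hx₀ y (hxx₀.trans hy)
  rw [Real.norm_eq_abs, Real.norm_of_nonneg (div_nonneg (truncSqMoment_nonneg x) hx.le), ← hθc]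
  exact (abs_truncMean_le hX hmean htail_int).trans htail

end TruncatedMoments

section Threshold

variable {l : ℝ → ℝ} {a c y : ℝ}

def thresholdSet (l : ℝ → ℝ) (a c : ℝ) : Set ℝ := {x | a ≤ x ∧ c * l x ≤ x ^ 2}

theorem Monotone.pos_of_sInf_lt (hl : Monotone l) (hne : {x | 0 < x ∧ 0 < l x}.Nonempty)
    (hy : sInf {x | 0 < x ∧ 0 < l x} < y) : 0 < l y := by
  obtain ⟨z, hz, hzy⟩ := exists_lt_of_csInf_lt hne hy
  exact hz.2.trans_le (hl hzy.le)

theorem thresholdSet_nonempty (hl0 : ∀ x, 0 ≤ l x)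
    (hlim : Tendsto (fun x => l x / x ^ 2) atTop (𝓝 0)) (a c : ℝ) :
    (thresholdSet l a c).Nonempty := by
  have hsmall : ∀ᶠ x in atTop, l x / x ^ 2 < 1 / (|c| + 1) :=
    hlim.eventually (gt_mem_nhds (by positivity))
  obtain ⟨x, hx, hxa, hx0⟩ :=
    (hsmall.and ((eventually_ge_atTop a).and (eventually_gt_atTop 0))).exists
  refine ⟨x, hxa, ?_⟩
  rw [div_lt_div_iff₀ (by positivity) (by positivity), one_mul] at hx
  nlinarith [mul_le_mul_of_nonneg_right (le_abs_self c) (hl0 x), hl0 x]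

theorem mul_le_sq_sInf_thresholdSet (hl : Monotone l) (hc : 0 ≤ c)
    (hne : (thresholdSet l a c).Nonempty) :
    c * l (sInf (thresholdSet l a c)) ≤ sInf (thresholdSet l a c) ^ 2 := by
  set S := thresholdSet l a c
  have hbdd : BddBelow S := ⟨a, fun _ hx => hx.1⟩
  have hS : S ⊆ {x | c * l (sInf S) ≤ x ^ 2} := fun x hx =>
    (mul_le_mul_of_nonneg_left (hl (csInf_le hbdd hx)) hc).trans hx.2
  exact closure_minimal hS (isClosed_le continuous_const (continuous_pow 2))
    (csInf_mem_closure hne hbdd)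

theorem tendsto_sInf_thresholdSet (hl : Monotone l) (ha : 0 ≤ a) (hla : 0 < l a)
    (hne : ∀ n : ℕ, (thresholdSet l a n).Nonempty) :
    Tendsto (fun n : ℕ => sInf (thresholdSet l a n)) atTop atTop := by
  refine tendsto_atTop_mono (fun n => ?_)
    (Real.tendsto_sqrt_atTop.comp (tendsto_natCast_atTop_atTop.atTop_mul_const hla))
  have hbn : a ≤ sInf (thresholdSet l a n) := le_csInf (hne n) fun _ hx => hx.1
  rw [Function.comp_apply, ← Real.sqrt_sq (ha.trans hbn)]
  exact Real.sqrt_le_sqrt ((mul_le_mul_of_nonneg_left (hl hbn) n.cast_nonneg).trans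
    (mul_le_sq_sInf_thresholdSet hl n.cast_nonneg (hne n)))

theorem isBigO_sq_div_of_mul_le_sq {L B : ℕ → ℝ} (hL : ∀ n, 0 ≤ L n) (hB : ∀ n, 0 < B n)
    (h : ∀ n : ℕ, n * L n ≤ B n ^ 2) : (fun n => (L n / B n) ^ 2) =O[atTop] fun n => L n / n := by
  refine IsBigO.of_bound 1 ?_
  filter_upwards [eventually_gt_atTop 0] with n hn
  have hn' : (0 : ℝ) < n := Nat.cast_pos.mpr hn
  have hLn := hL n
  have hBn := hB n
  rw [Real.norm_of_nonneg (by positivity), Real.norm_of_nonneg (by positivity), one_mul, div_pow,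
    div_le_div_iff₀ (by positivity) hn']
  nlinarith [mul_le_mul_of_nonneg_left (h n) hLn]

end Threshold

/-- If `l(x) = E[|X|² 1_{|X| ≤ x}]` is slowly varying with `E|X|² = ∞`,
`E X = 0`, and `b_n = inf{x ≥ b+1 : n l(x) ≤ x²}`, then
`Var(X 1_{|X| ≤ b_n}) = l(b_n)(1 + o(1/n))` as `n → ∞`. -/
theorem truncated_variance_asymptotics
    {Ω : Type*} [MeasureSpace Ω] [IsProbabilityMeasure (ℙ : Measure Ω)]
    (X : Ω → ℝ) (hX : AEMeasurable X ℙ)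
    (hmean : ∫ ω, X ω ∂ℙ = 0)
    (l : ℝ → ℝ)
    (hl : ∀ x : ℝ, l x = ∫ ω in {ω | |X ω| ≤ x}, |X ω| ^ 2 ∂ℙ)
    (hslow : ∀ c : ℝ, 0 < c → Tendsto (fun x => l (c * x) / l x) atTop (nhds 1))
    (hinf : ¬ Integrable (fun ω => |X ω| ^ 2) ℙ)
    (b₀ : ℝ) (hb₀ : b₀ = sInf {x : ℝ | 0 < x ∧ 0 < l x})
    (b : ℕ → ℝ)
    (hb : ∀ n, b n = sInf {x : ℝ | b₀ + 1 ≤ x ∧ n * l x ≤ x ^ 2})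
    (V : ℕ → ℝ)
    (hV : ∀ n, V n = (∫ ω in {ω | |X ω| ≤ b n}, X ω ^ 2 ∂ℙ)
        - (∫ ω in {ω | |X ω| ≤ b n}, X ω ∂ℙ) ^ 2) :
    (fun n => V n - l (b n)) =o[atTop] (fun n => l (b n) / n) := by
  obtain ⟨Y, hY, hXY⟩ : ∃ Y, Measurable Y ∧ X =ᵐ[ℙ] Y :=
    ⟨hX.mk X, hX.measurable_mk, hX.ae_eq_mk⟩
  have hVb : ∀ n, V n - l (b n) = -truncMean ℙ Y (b n) ^ 2 := fun n => by
    rw [hV, hl, ← truncMean_congr hXY, truncMean]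
    simp only [sq_abs]
    ring
  obtain rfl : l = truncSqMoment ℙ Y :=
    funext fun x => (hl x).trans (congrFun (truncSqMoment_congr hXY) x)
  have hmeanY : ∫ ω, Y ω ∂ℙ = 0 := (integral_congr_ae hXY).symm.trans hmean
  have hinfY : ¬Integrable (fun ω => |Y ω| ^ 2) ℙ := fun h =>
    hinf (h.congr (hXY.fun_comp fun t => |t| ^ 2).symm)
  have hmono := truncSqMoment_mono hY (μ := ℙ)
  have htop := tendsto_truncSqMoment_atTop hY hinfY
  have hb₀_nonneg : 0 ≤ b₀ := hb₀ ▸ Real.sInf_nonneg fun x hx => hx.1.le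
  have hpos : 0 < truncSqMoment ℙ Y (b₀ + 1) := hmono.pos_of_sInf_lt
    ((eventually_gt_atTop 0).and (htop.eventually_gt_atTop 0)).exists (by linarith)
  have hne := thresholdSet_nonempty truncSqMoment_nonneg
    (tendsto_truncSqMoment_div_sq (μ := ℙ) hY) (b₀ + 1)
  obtain rfl : b = fun n : ℕ => sInf (thresholdSet (truncSqMoment ℙ Y) (b₀ + 1) n) := funext hb
  have hbound := isBigO_sq_div_of_mul_le_sq (fun _ => truncSqMoment_nonneg _)
    (fun n => (by linarith : (0 : ℝ) < b₀ + 1).trans_le (le_csInf (hne n) fun _ hx => hx.1))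
    (fun n => mul_le_sq_sInf_thresholdSet hmono n.cast_nonneg (hne n))
  have hmean_o := ((truncMean_isLittleO hY hmeanY (hslow 2 two_pos)
    (htop.eventually_gt_atTop 0)).comp_tendsto
    (tendsto_sInf_thresholdSet hmono (by linarith) hpos fun n => hne n)).pow two_pos
  exact (hmean_o.neg_left.trans_isBigO hbound).congr_left fun n => (hVb n).symm
end
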